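/- arXiv:2205.10769 — 3 statements merged into one kernel-verified Lean document; each statement's English description precedes it below -/
import Mathlib

section
/- Let A be an invertible d×d real matrix with ℝ^d = E^s ⊕ E^u, where there exist 0 < λ_s < 1 < λ_u and C < ∞ with ‖Aⁿv‖ ≤ C λ_sⁿ ‖v‖ for v ∈ E^s, n ≥ 0, and ‖A^{-n}v‖ ≤ C λ_u^{-n} ‖v‖ for v ∈ E^u, n ≥ 0. Let T(x) = A x + a. Then for any two bi-infinite trajectories (x_k), (y_k) of T, the affine subspaces x₀ + E^u and y₀ + E^s intersect, and for any z₀ in the intersection the trajectory z_k = T^k z₀ satisfies ‖z_k − x_k‖ ≤ C' (λ_s^{|k|} + λ_u^{-|k|})·‖x₀−y₀‖ for all k < 0 and ‖z_k − y_k‖ ≤ C' (λ_s^{|k|} + λ_u^{-|k|})·‖x₀−y₀‖ for all k ≥ 0, for some constant C' depending only on A and the splitting. -/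
/-!
Differences of two orbits of the affine map `T x = A x + a` are orbits of the linear map `A`.
The gluing point `z₀` is forced: `z₀ - y₀` and `z₀ - x₀` are the components of `x₀ - y₀` and
`y₀ - x₀` along the splitting `E^s ⊕ E^u`, so both are bounded by `‖x₀ - y₀‖` up to the norms of
the two (continuous, since the dimension is finite) projections. Forward in time `z - y` lies in
`E^s` and contracts like `λ_s^k`; backward in time `z - x` lies in `E^u` and contracts like
`λ_u^k`.
-/

namespace Submodule

variable {R E : Type*} [Ring R] [AddCommGroup E] [Module R E] {p q : Submodule R E}

theorem projection_sub_eq_of_sub_mem (hpq : IsCompl p q) {x y w : E} (hy : w - y ∈ p)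
    (hx : w - x ∈ q) : p.projection q hpq (x - y) = w - y := by
  rw [show x - y = (w - y) - (w - x) by abel, map_sub, projection_apply_of_mem_left hpq hy,
    projection_apply_of_mem_right hpq hx, sub_zero]

theorem exists_sub_mem_and_sub_mem (hpq : IsCompl p q) (x y : E) :
    ∃ w, w - x ∈ q ∧ w - y ∈ p := by
  refine ⟨y + p.projection q hpq (x - y), ?_, by
    rw [add_sub_cancel_left]; exact projection_apply_mem hpq _⟩
  rw [show y + p.projection q hpq (x - y) - x = -((x - y) - p.projection q hpq (x - y)) by abel]
  exact q.neg_mem (sub_projection_mem hpq _)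

end Submodule

namespace LinearEquiv

variable {R E : Type*} [Semiring R] [AddCommGroup E] [Module R E] (A : E ≃ₗ[R] E) {a : E}
  {x z : ℤ → E}

theorem map_sub_of_affine_orbits (hx : ∀ k, A (x k) + a = x (k + 1))
    (hz : ∀ k, A (z k) + a = z (k + 1)) (k : ℤ) :
    A (z k - x k) = z (k + 1) - x (k + 1) := by
  rw [map_sub, ← hx, ← hz, add_sub_add_right_eq_sub]

theorem sub_affine_orbits_natCast (hx : ∀ k, A (x k) + a = x (k + 1))
    (hz : ∀ k, A (z k) + a = z (k + 1)) (n : ℕ) :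
    z n - x n = (A ^ n) (z 0 - x 0) := by
  induction n with
  | zero => simp
  | succ n ih =>
    rw [pow_succ', mul_apply, ← ih, map_sub_of_affine_orbits A hx hz]
    push_cast
    rfl

theorem sub_affine_orbits_neg_natCast (hx : ∀ k, A (x k) + a = x (k + 1))
    (hz : ∀ k, A (z k) + a = z (k + 1)) (n : ℕ) :
    z (-n) - x (-n) = (A.symm ^ n) (z 0 - x 0) := by
  induction n with
  | zero => simp
  | succ n ih =>
    have hstep := map_sub_of_affine_orbits A hx hz (-n - 1)
    rw [sub_add_cancel] at hstep
    rw [pow_succ', mul_apply, ← ih, ← hstep, symm_apply_apply]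
    push_cast
    rw [neg_add']

end LinearEquiv

theorem hyperbolic_affine_gluing_general (d : ℕ)
    (A : EuclideanSpace ℝ (Fin d) ≃ₗ[ℝ] EuclideanSpace ℝ (Fin d))
    (Es Eu : Submodule ℝ (EuclideanSpace ℝ (Fin d)))
    (C lams lamu : ℝ) (hlams : 0 < lams) (h2 : 1 < lamu) (hC : 0 < C)
    (hsplit : Es ⊓ Eu = ⊥) (hspan : Es ⊔ Eu = ⊤)
    (hs : ∀ v ∈ Es, ∀ n : ℕ, ‖(A ^ n) v‖ ≤ C * lams ^ n * ‖v‖)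
    (hu : ∀ v ∈ Eu, ∀ n : ℕ, ‖(A.symm ^ n) v‖ ≤ C * lamu ^ (-(n : ℤ)) * ‖v‖) :
    ∃ C' > (0 : ℝ), ∀ (a : EuclideanSpace ℝ (Fin d)) (x y : ℤ → EuclideanSpace ℝ (Fin d)),
      (∀ k, A (x k) + a = x (k + 1)) → (∀ k, A (y k) + a = y (k + 1)) →
      (∃ w, w - x 0 ∈ Eu ∧ w - y 0 ∈ Es) ∧
        ∀ z : ℤ → EuclideanSpace ℝ (Fin d), (∀ k, A (z k) + a = z (k + 1)) →
          z 0 - x 0 ∈ Eu → z 0 - y 0 ∈ Es →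
          (∀ k < 0, ‖z k - x k‖ ≤ C' * (lams ^ (-k) + lamu ^ k) * ‖x 0 - y 0‖) ∧
          (∀ k ≥ 0, ‖z k - y k‖ ≤ C' * (lams ^ k + lamu ^ (-k)) * ‖x 0 - y 0‖) := by
  have hc : IsCompl Es Eu := ⟨disjoint_iff.2 hsplit, codisjoint_iff.2 hspan⟩
  set P := LinearMap.toContinuousLinearMap (Es.projection Eu hc)
  set Q := LinearMap.toContinuousLinearMap (Eu.projection Es hc.symm)
  have hCP : C * ‖P‖ ≤ C * (‖P‖ + ‖Q‖) + 1 := by nlinarith [norm_nonneg Q]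
  have hCQ : C * ‖Q‖ ≤ C * (‖P‖ + ‖Q‖) + 1 := by nlinarith [norm_nonneg P]
  refine ⟨C * (‖P‖ + ‖Q‖) + 1, by positivity, fun a x y hx hy =>
    ⟨Submodule.exists_sub_mem_and_sub_mem hc (x 0) (y 0), fun z hz hzx hzy => ⟨?_, ?_⟩⟩⟩
  · intro k hk
    obtain ⟨n, rfl⟩ := Int.exists_eq_neg_ofNat hk.le
    have hz0 : ‖z 0 - x 0‖ ≤ ‖Q‖ * ‖x 0 - y 0‖ := by
      rw [← Submodule.projection_sub_eq_of_sub_mem hc.symm hzx hzy, norm_sub_rev (x 0)]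
      exact Q.le_opNorm _
    have hs0 : 0 ≤ lams ^ (-(-n : ℤ)) := zpow_nonneg hlams.le _
    calc ‖z (-n) - x (-n)‖ = ‖(A.symm ^ n) (z 0 - x 0)‖ := by
          rw [A.sub_affine_orbits_neg_natCast hx hz]
      _ ≤ C * lamu ^ (-(n : ℤ)) * ‖z 0 - x 0‖ := hu _ hzx n
      _ ≤ C * lamu ^ (-(n : ℤ)) * (‖Q‖ * ‖x 0 - y 0‖) := by gcongr
      _ = C * ‖Q‖ * lamu ^ (-(n : ℤ)) * ‖x 0 - y 0‖ := by ring
      _ ≤ _ := by gcongr; exact le_add_of_nonneg_left hs0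
  · intro k hk
    obtain ⟨n, rfl⟩ := Int.eq_ofNat_of_zero_le hk
    have hz0 : ‖z 0 - y 0‖ ≤ ‖P‖ * ‖x 0 - y 0‖ := by
      rw [← Submodule.projection_sub_eq_of_sub_mem hc hzy hzx]
      exact P.le_opNorm _
    have hu0 : 0 ≤ lamu ^ (-(n : ℤ)) := zpow_nonneg (by linarith) _
    calc ‖z n - y n‖ = ‖(A ^ n) (z 0 - y 0)‖ := by rw [A.sub_affine_orbits_natCast hy hz]
      _ ≤ C * lams ^ n * ‖z 0 - y 0‖ := hs _ hzy n
      _ ≤ C * lams ^ n * (‖P‖ * ‖x 0 - y 0‖) := by gcongr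
      _ = C * ‖P‖ * lams ^ (n : ℤ) * ‖x 0 - y 0‖ := by rw [zpow_natCast]; ring
      _ ≤ _ := by gcongr; exact le_add_of_nonneg_right hu0

theorem hyperbolic_affine_gluing (d : ℕ)
    (A : EuclideanSpace ℝ (Fin d) ≃ₗ[ℝ] EuclideanSpace ℝ (Fin d))
    (Es Eu : Submodule ℝ (EuclideanSpace ℝ (Fin d)))
    (C lams lamu : ℝ) (hlams : 0 < lams) (h1 : lams < 1) (h2 : 1 < lamu) (hC : 0 < C)
    (hsplit : Es ⊓ Eu = ⊥) (hspan : Es ⊔ Eu = ⊤)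
    (hinvs : ∀ v ∈ Es, A v ∈ Es) (hinvu : ∀ v ∈ Eu, A v ∈ Eu)
    (hs : ∀ v ∈ Es, ∀ n : ℕ, ‖(A ^ n) v‖ ≤ C * lams ^ n * ‖v‖)
    (hu : ∀ v ∈ Eu, ∀ n : ℕ, ‖(A.symm ^ n) v‖ ≤ C * lamu ^ (-(n : ℤ)) * ‖v‖) :
    ∃ C' > (0 : ℝ), ∀ (a : EuclideanSpace ℝ (Fin d)) (x y : ℤ → EuclideanSpace ℝ (Fin d)),
      (∀ k, A (x k) + a = x (k + 1)) → (∀ k, A (y k) + a = y (k + 1)) →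
      (∃ w, w - x 0 ∈ Eu ∧ w - y 0 ∈ Es) ∧
        ∀ z : ℤ → EuclideanSpace ℝ (Fin d), (∀ k, A (z k) + a = z (k + 1)) →
          z 0 - x 0 ∈ Eu → z 0 - y 0 ∈ Es →
          (∀ k < 0, ‖z k - x k‖ ≤ C' * (lams ^ (-k) + lamu ^ k) * ‖x 0 - y 0‖) ∧
          (∀ k ≥ 0, ‖z k - y k‖ ≤ C' * (lams ^ k + lamu ^ (-k)) * ‖x 0 - y 0‖) :=
  hyperbolic_affine_gluing_general d A Es Eu C lams lamu hlams h2 hC hsplit hspan hs hu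
end

section
/- Let π be a transition matrix on a finite alphabet with π^M > 0 for some M. With the metric ρ(s,u) = ∑_{k∈ℤ} 2^{-|k|}·[s_k ≠ u_k] on A^ℤ, for any two admissible sequences s, u ∈ Σ_π there exists z ∈ Σ_π such that ρ(σ^k z, σ^k s) ≤ 3·2^{-(|k|−M)} for all k ≤ −M and ρ(σ^k z, σ^k u) ≤ 3·2^{-(k−M)} for all k ≥ M, where σ is the shift map. -/
noncomputable def rho {A : Type*} [DecidableEq A] (s u : ℤ → A) : ℝ :=
  ∑' k : ℤ, (2 : ℝ) ^ (-|k|) * (if s k = u k then 0 else 1)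

/-!
Follow `s` up to time `-M`, then walk from `s (-M)` to `u 0` in exactly `M` steps (such a path
exists because `π ^ M > 0`), then follow `u`. The shifts `σ^k z` and `σ^k s` (for `k ≤ -M`), resp.
`σ^k z` and `σ^k u` (for `k ≥ M`), then agree on the window `[-n, n]` with `n = |k| - M`, and two
sequences agreeing on that window are `2 · 2^{-n}`-close by the geometric tail estimate.
-/

section Metric

variable {A : Type*} [DecidableEq A]

lemma rho_le_of_eqOn_window {f g : ℤ → A} {N : ℤ} (hN : 0 ≤ N)
    (h : ∀ j, |j| ≤ N → f j = g j) : rho f g ≤ 2 * 2 ^ (-N) := by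
  lift N to ℕ using hN
  set t : ℕ → ℝ := fun i => if N + 1 ≤ i then (2 : ℝ)⁻¹ ^ i else 0
  have ht : HasSum t ((2 : ℝ)⁻¹ ^ N) := by
    have hsum : Summable t := summable_geometric_two.of_nonneg_of_le
      (fun i => by positivity) (fun i => by simp only [t, one_div]; split_ifs <;> simp)
    convert hsum.hasSum using 1
    rw [tsum_geometric_inv_two_ge, pow_succ]
    ring
  -- the majorant `b j = 2 ^ (-|j|) · [N < |j|]`
  set b : ℤ → ℝ := fun j => t j.natAbs
  have hb : HasSum b (2 * 2 ^ (-(N : ℤ))) := by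
    have := ht.of_nat_of_neg (f := b) (by simpa [b] using ht)
    simpa [b, t, two_mul, zpow_neg, inv_pow] using this
  have hle : ∀ j, (2 : ℝ) ^ (-|j|) * (if f j = g j then 0 else 1) ≤ b j := by
    intro j
    by_cases hj : f j = g j
    · simp only [hj, if_true, mul_zero, b, t]
      split_ifs <;> positivity
    · have hN : N + 1 ≤ j.natAbs := by
        by_contra hc
        exact hj (h j (by rw [Int.abs_eq_natAbs]; omega))
      simp only [hj, if_false, mul_one, b, t, if_pos hN]
      rw [Int.abs_eq_natAbs, zpow_neg, zpow_natCast, inv_pow]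
  exact (Summable.tsum_le_tsum hle
    (hb.summable.of_nonneg_of_le (fun j => by positivity) hle) hb.summable).trans_eq hb.tsum_eq

lemma rho_shift_le_of_eq_of_le {z s : ℤ → A} {a k : ℤ} (hk : k ≤ a) (h : ∀ j ≤ a, z j = s j) :
    rho (fun j => z (j + k)) (fun j => s (j + k)) ≤ 2 * 2 ^ (-(a - k)) :=
  rho_le_of_eqOn_window (by omega) fun j hj => h _ (by have := le_abs_self j; omega)

lemma rho_shift_le_of_eq_of_ge {z u : ℤ → A} {a k : ℤ} (hk : a ≤ k) (h : ∀ j ≥ a, z j = u j) :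
    rho (fun j => z (j + k)) (fun j => u (j + k)) ≤ 2 * 2 ^ (-(k - a)) :=
  rho_le_of_eqOn_window (by omega) fun j hj => h _ (by have := neg_abs_le j; omega)

end Metric

section Gluing

variable {A : Type*} (M : ℕ) (s : ℤ → A) (w : ℕ → A) (u : ℤ → A)

def glue : ℤ → A := fun j =>
  if j < -(M : ℤ) then s j else if j ≤ 0 then w (j + M).toNat else u j

variable {M s w u}

lemma glue_of_mem_Icc {j : ℤ} (h₁ : -(M : ℤ) ≤ j) (h₂ : j ≤ 0) :
    glue M s w u j = w (j + M).toNat := by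
  simp [glue, not_lt.mpr h₁, h₂]

lemma glue_of_le_neg (hw : w 0 = s (-M)) {j : ℤ} (hj : j ≤ -(M : ℤ)) : glue M s w u j = s j := by
  rcases hj.lt_or_eq with hj | rfl
  · simp [glue, hj]
  · rw [glue_of_mem_Icc le_rfl (by omega), neg_add_cancel, Int.toNat_zero, hw]

lemma glue_of_nonneg (hw : w M = u 0) {j : ℤ} (hj : 0 ≤ j) : glue M s w u j = u j := by
  rcases hj.lt_or_eq with hj | rfl
  · simp [glue, hj.not_ge, show ¬ j < -(M : ℤ) by omega]
  · rw [glue_of_mem_Icc (by omega) le_rfl, zero_add, Int.toNat_natCast, hw]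

lemma glue_chain {P : A → A → Prop} (hs : ∀ k, P (s k) (s (k + 1)))
    (hw : ∀ k < M, P (w k) (w (k + 1))) (hu : ∀ k, P (u k) (u (k + 1)))
    (hw₀ : w 0 = s (-M)) (hw₁ : w M = u 0) (k : ℤ) :
    P (glue M s w u k) (glue M s w u (k + 1)) := by
  by_cases hks : k + 1 ≤ -(M : ℤ)
  · rw [glue_of_le_neg hw₀ (by omega), glue_of_le_neg hw₀ hks]
    exact hs k
  by_cases hku : 0 ≤ k
  · rw [glue_of_nonneg hw₁ hku, glue_of_nonneg hw₁ (by omega)]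
    exact hu k
  rw [glue_of_mem_Icc (by omega) (by omega), glue_of_mem_Icc (by omega) (by omega),
    show (k + 1 + M).toNat = (k + M).toNat + 1 by omega]
  exact hw _ (by omega)

end Gluing

theorem mixing_shift_gluing_metric_general {A : Type*} [DecidableEq A]
    (P : A → A → Prop) (M : ℕ)
    (hpos : ∀ i j : A, ∃ w : ℕ → A, w 0 = i ∧ w M = j ∧ ∀ k < M, P (w k) (w (k + 1)))
    (s u : ℤ → A) (hs : ∀ k, P (s k) (s (k + 1))) (hu : ∀ k, P (u k) (u (k + 1))) :
    ∃ z : ℤ → A, (∀ k, P (z k) (z (k + 1))) ∧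
      (∀ k : ℤ, k ≤ -(M : ℤ) →
        rho (fun j => z (j + k)) (fun j => s (j + k)) ≤ 3 * (2 : ℝ) ^ (-(|k| - (M : ℤ)))) ∧
      (∀ k : ℤ, (M : ℤ) ≤ k →
        rho (fun j => z (j + k)) (fun j => u (j + k)) ≤ 3 * (2 : ℝ) ^ (-(k - (M : ℤ)))) := by
  obtain ⟨w, hw₀, hw₁, hw⟩ := hpos (s (-M)) (u 0)
  refine ⟨glue M s w u, glue_chain hs hw hu hw₀ hw₁, fun k hk => ?_, fun k hk => ?_⟩
  · have hwin := rho_shift_le_of_eq_of_le hk fun j hj => glue_of_le_neg (u := u) hw₀ hj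
    rw [abs_of_nonpos (by omega), show -k - M = -M - k by ring]
    exact hwin.trans (by gcongr; norm_num)
  · have hwin := rho_shift_le_of_eq_of_ge hk fun j hj =>
      glue_of_nonneg (s := s) hw₁ (le_trans (Nat.cast_nonneg M) hj)
    exact hwin.trans (by gcongr; norm_num)

theorem mixing_shift_gluing_metric {A : Type*} [Fintype A] [DecidableEq A]
    (P : A → A → Prop) (M : ℕ)
    (hpos : ∀ i j : A, ∃ w : ℕ → A, w 0 = i ∧ w M = j ∧ ∀ k < M, P (w k) (w (k + 1)))
    (s u : ℤ → A) (hs : ∀ k, P (s k) (s (k + 1))) (hu : ∀ k, P (u k) (u (k + 1))) :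
    ∃ z : ℤ → A, (∀ k, P (z k) (z (k + 1))) ∧
      (∀ k : ℤ, k ≤ -(M : ℤ) →
        rho (fun j => z (j + k)) (fun j => s (j + k)) ≤ 3 * (2 : ℝ) ^ (-(|k| - (M : ℤ)))) ∧
      (∀ k : ℤ, (M : ℤ) ≤ k →
        rho (fun j => z (j + k)) (fun j => u (j + k)) ≤ 3 * (2 : ℝ) ^ (-(k - (M : ℤ)))) :=
  mixing_shift_gluing_metric_general P M hpos s u hs hu
end

section
/- Let T(x) = x(1+a x^α) on [0, c] with a > 0, α > 1, c(1+ac^α)=1. Then for the inverse branch τ⁻¹ of T (mapping [0,1] onto [0,c]) and for every summable function φ : ℤ₊ → ℝ≥0, there exist trajectories that violate the strong gluing bound: specifically, there exist v ∈ (0,1] and infinitely many n with τ^{-n}(v) > φ(n)·v. -/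
/-!
Let `w n` be the backward orbit of `1`, so `w k = w (k+1) + a * w (k+1) ^ (1 + α)`. Since
`w (k+1) ^ α ≤ w (k+1) ≤ w k` for `α ≥ 1`, this gives `1 / w (k+1) - 1 / w k ≤ a`, hence
`w n ≥ 1 / (1 + a n)`: the orbit decays no faster than the harmonic series and is not summable.
If `w n ≤ φ n` held for all but finitely many `n`, the orbit would be summable.
-/

open Set

theorem Function.iterate_apply_eq_of_apply_succ_eq {β : Type*} {f : β → β} {w : ℕ → β}
    (h : ∀ k, f (w (k + 1)) = w k) (n : ℕ) : f^[n] (w n) = w 0 := by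
  induction n with
  | zero => rfl
  | succ n ih => rw [Function.iterate_succ_apply, h, ih]

theorem exists_backward_orbit {f : ℝ → ℝ} (hf : ∀ y, 0 ≤ y → ∃ x ∈ Icc 0 y, f x = y)
    {y₀ : ℝ} (hy₀ : 0 ≤ y₀) :
    ∃ w : ℕ → ℝ, w 0 = y₀ ∧ ∀ k, w (k + 1) ∈ Icc 0 (w k) ∧ f (w (k + 1)) = w k := by
  choose! g hg hfg using hf
  have hnonneg : ∀ n, 0 ≤ g^[n] y₀ := by
    intro n
    induction n with
    | zero => exact hy₀
    | succ n ih => rw [Function.iterate_succ_apply']; exact (hg _ ih).1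
  refine ⟨fun n => g^[n] y₀, rfl, fun k => ?_⟩
  simp only [Function.iterate_succ_apply']
  exact ⟨hg _ (hnonneg k), hfg _ (hnonneg k)⟩

theorem inv_le_inv_add_mul_of_inv_sub_inv_le {w : ℕ → ℝ} {C : ℝ}
    (h : ∀ k, (w (k + 1))⁻¹ - (w k)⁻¹ ≤ C) (n : ℕ) : (w n)⁻¹ ≤ (w 0)⁻¹ + C * n := by
  induction n with
  | zero => simp
  | succ n ih => push_cast; linarith [h n]

theorem not_summable_inv_one_add_mul {a : ℝ} (ha : 0 ≤ a) :
    ¬Summable fun n : ℕ => (1 + a * n)⁻¹ := by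
  intro hsum
  have hharm : Summable fun n : ℕ => ((n + 1 : ℕ) : ℝ)⁻¹ := by
    refine (hsum.mul_left (1 + a)).of_nonneg_of_le (fun n => by positivity) fun n => ?_
    rw [← div_eq_mul_inv, le_div_iff₀ (by positivity), ← div_eq_inv_mul,
      div_le_iff₀ (by positivity)]
    push_cast
    nlinarith [(n.cast_nonneg : (0 : ℝ) ≤ n)]
  exact Real.not_summable_natCast_inv ((summable_nat_add_iff 1).mp hharm)

section AddMulRpow

variable {a α : ℝ}

theorem exists_mem_Icc_add_mul_rpow_eq (ha : 0 ≤ a) {p : ℝ} (hp : 0 < p) {y : ℝ} (hy : 0 ≤ y) :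
    ∃ x ∈ Icc 0 y, x + a * x ^ p = y := by
  have hcont : Continuous fun x : ℝ => x + a * x ^ p :=
    continuous_id.add (continuous_const.mul (Real.continuous_rpow_const hp.le))
  refine intermediate_value_Icc hy hcont.continuousOn ⟨?_, ?_⟩
  · simp [Real.zero_rpow hp.ne', hy]
  · simp only [le_add_iff_nonneg_right]; positivity

theorem inv_sub_inv_le_of_add_mul_rpow_eq (ha : 0 ≤ a) (hα : 1 ≤ α) {x y : ℝ}
    (hy : 0 < y) (hx : x ≤ 1) (h : y + a * y ^ (1 + α) = x) : y⁻¹ - x⁻¹ ≤ a := by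
  have hyx : y ≤ x := by rw [← h]; simp only [le_add_iff_nonneg_right]; positivity
  have hpow : y ^ α ≤ y := by
    simpa using Real.rpow_le_rpow_of_exponent_ge hy (hyx.trans hx) hα
  have hstep : x - y ≤ a * (y * x) :=
    calc x - y = a * y * y ^ α := by rw [← h, Real.rpow_add hy, Real.rpow_one]; ring
      _ ≤ a * y * x := by gcongr; exact hpow.trans hyx
      _ = a * (y * x) := by ring
  rw [inv_sub_inv hy.ne' (hy.trans_le hyx).ne', div_le_iff₀ (by nlinarith)]
  linarith

theorem inv_one_add_mul_le_of_backward_orbit (ha : 0 ≤ a) (hα : 1 ≤ α) {w : ℕ → ℝ}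
    (hw₀ : w 0 = 1) (hw : ∀ k, w (k + 1) ∈ Icc 0 (w k) ∧ w (k + 1) + a * w (k + 1) ^ (1 + α) = w k)
    (n : ℕ) : 0 < w n ∧ (1 + a * n)⁻¹ ≤ w n := by
  have hpos : ∀ k, 0 < w k := by
    intro k
    induction k with
    | zero => rw [hw₀]; exact one_pos
    | succ k ih =>
      obtain ⟨⟨hnonneg, -⟩, hrec⟩ := hw k
      refine hnonneg.lt_of_ne fun hzero => ih.ne' ?_
      rw [← hrec, ← hzero, Real.zero_rpow (by linarith)]
      ring
  have hle : ∀ k, w k ≤ 1 := fun k =>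
    hw₀ ▸ antitone_nat_of_succ_le (fun k => (hw k).1.2) k.zero_le
  have hinv := inv_le_inv_add_mul_of_inv_sub_inv_le
    (fun k => inv_sub_inv_le_of_add_mul_rpow_eq ha hα (hpos (k + 1)) (hle k) (hw k).2) n
  rw [hw₀, inv_one] at hinv
  have hden : 0 < 1 + a * n := by have := mul_nonneg ha n.cast_nonneg; linarith
  exact ⟨hpos n, (inv_le_comm₀ hden (hpos n)).mpr hinv⟩

end AddMulRpow

theorem strong_gluing_violated (a α : ℝ) (ha : 0 < a) (hα : 1 < α)
    (τ : ℝ → ℝ) (hτ : ∀ v, τ v = v + a * v ^ (1 + α)) :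
    ∀ φ : ℕ → ℝ, (∀ n, 0 ≤ φ n) → Summable φ →
      ∃ v : ℝ, v ∈ Set.Ioc (0 : ℝ) 1 ∧
        {n : ℕ | ∃ w : ℝ, 0 ≤ w ∧ τ^[n] w = v ∧ φ n * v < w}.Infinite := by
  intro φ _ hφ
  obtain rfl : τ = fun v => v + a * v ^ (1 + α) := funext hτ
  obtain ⟨w, hw₀, hw⟩ := exists_backward_orbit
    (fun y hy => exists_mem_Icc_add_mul_rpow_eq ha.le (by linarith : 0 < 1 + α) hy) zero_le_one
  have hbound := inv_one_add_mul_le_of_backward_orbit ha.le hα.le hw₀ hw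
  refine ⟨1, ⟨one_pos, le_rfl⟩, fun hfin => not_summable_inv_one_add_mul ha.le ?_⟩
  refine hφ.of_norm_bounded_eventually ?_
  filter_upwards [hfin.eventually_cofinite_notMem] with n hn
  have hiter := Function.iterate_apply_eq_of_apply_succ_eq
    (f := fun v => v + a * v ^ (1 + α)) (fun k => (hw k).2) n
  rw [hw₀] at hiter
  have hwφ : w n ≤ φ n := by
    by_contra! hlt
    exact hn ⟨w n, (hbound n).1.le, hiter, by rwa [mul_one]⟩
  rw [Real.norm_of_nonneg (by positivity)]
  exact (hbound n).2.trans hwφ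
end
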